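/- arXiv:0903.4640 — 9 statements merged into one kernel-verified Lean document; each statement's English description precedes it below -/
import Mathlib

section
/- In a pre-crystalline graded ring A = ⊕_{g∈G} R u_g with u_g r = σ_g(r) u_g and u_g u_h = α(g,h) u_{gh}, the maps σ_g : R → R are surjective ring homomorphisms and σ_e = id_R. -/
/-- A pre-crystalline graded ring `A = ⊕_{g ∈ G} R u_g`:
`R` is a subring of `A` sharing its unit, `u : G → A` is injective with `u_e = 1`
and `u_g ≠ 0`; (C1) every element of `A` is uniquely a finite sum `Σ r_g u_g`
(the `basis` field), (C2) `R u_g = u_g R` (the `set_eq` field) is free of rank 1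
as a left `R`-module (freeness follows from `basis`), and the structure maps
`σ_g : R → R`, `α : G × G → R` are defined by `u_g r = σ_g(r) u_g` and
`u_g u_h = α(g,h) u_{gh}`. -/
structure PreCrystalline (G A : Type*) [Group G] [Ring A] where
  R : Subring A
  u : G → A
  σ : G → ↥R → ↥R
  α : G → G → ↥R
  u_inj : Function.Injective u
  u_one : u 1 = 1
  u_ne_zero : ∀ g : G, u g ≠ 0
  basis : Function.Bijective (fun f : G →₀ ↥R => f.sum fun g r => (r : A) * u g)
  set_eq : ∀ g : G, {x : A | ∃ r : ↥R, x = (r : A) * u g} =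
      {x : A | ∃ r : ↥R, x = u g * (r : A)}
  comm : ∀ (g : G) (r : ↥R), u g * (r : A) = (σ g r : A) * u g
  mul_u : ∀ g h : G, u g * u h = (α g h : A) * u (g * h)

/-!
Since `u_g` is part of an `R`-basis of `A`, right multiplication by `u_g` is injective on `R`.
Each identity for `σ_g` is therefore checked after multiplying by `u_g` on the right, where it
follows from `u_g r = σ_g(r) u_g` and the ring axioms of `A`; surjectivity comes from `R u_g ⊆ u_g R`.
-/

namespace PreCrystalline

variable {G A : Type*} [Group G] [Ring A] (P : PreCrystalline G A)

theorem coe_mul_u_inj (g : G) {r s : ↥P.R} : (r : A) * P.u g = (s : A) * P.u g ↔ r = s := by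
  refine ⟨fun h => Finsupp.single_injective g (P.basis.1 ?_), fun h => h ▸ rfl⟩
  simpa only [Finsupp.sum_single_index, ZeroMemClass.coe_zero, zero_mul] using h

theorem σ_map_add (g : G) (r s : ↥P.R) : P.σ g (r + s) = P.σ g r + P.σ g s :=
  (P.coe_mul_u_inj g).1 <| by
    simp only [Subring.coe_add, add_mul, ← P.comm, mul_add]

theorem σ_map_mul (g : G) (r s : ↥P.R) : P.σ g (r * s) = P.σ g r * P.σ g s :=
  (P.coe_mul_u_inj g).1 <| by
    rw [← P.comm, Subring.coe_mul, Subring.coe_mul, mul_assoc, ← P.comm, ← mul_assoc, ← mul_assoc,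
      ← P.comm]

theorem σ_map_one (g : G) : P.σ g 1 = 1 :=
  (P.coe_mul_u_inj g).1 <| by
    simp only [← P.comm, OneMemClass.coe_one, mul_one, one_mul]

theorem σ_surjective (g : G) : Function.Surjective (P.σ g) := by
  intro r
  obtain ⟨s, hs⟩ := (Set.ext_iff.1 (P.set_eq g) ((r : A) * P.u g)).1 ⟨r, rfl⟩
  exact ⟨s, (P.coe_mul_u_inj g).1 (by simp only [← P.comm, hs])⟩

theorem σ_one_eq_id : P.σ 1 = id :=
  funext fun r => (P.coe_mul_u_inj 1).1 <| by
    rw [← P.comm, P.u_one, mul_one, one_mul, id]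

end PreCrystalline

/-- In a pre-crystalline graded ring, each `σ_g` is a surjective ring
morphism and `σ_e = id_R`. -/
theorem sigma_surjective_ringHom_and_sigma_one {G A : Type*} [Group G] [Ring A]
    (P : PreCrystalline G A) :
    (∀ g : G, Function.Surjective (P.σ g)) ∧
    (∀ (g : G) (r s : ↥P.R), P.σ g (r + s) = P.σ g r + P.σ g s) ∧
    (∀ (g : G) (r s : ↥P.R), P.σ g (r * s) = P.σ g r * P.σ g s) ∧
    (∀ g : G, P.σ g 1 = 1) ∧
    P.σ 1 = id :=
  ⟨P.σ_surjective, P.σ_map_add, P.σ_map_mul, P.σ_map_one, P.σ_one_eq_id⟩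
end

section
/- Let A = R ◊_{σ,α} G be a crystalline graded ring with R a commutative domain and G finite, and let W = {g ∈ G : σ_g = id_R}. If Σ_{s∈G} r_s u_s lies in the center Z(A), then r_s = 0 for all s ∉ W. -/
/-- A crystalline graded ring `A = D ◊_{σ,α} G` over a commutative domain `D`:
`D` embeds in `A` via `ι`, `u : G → A` with `u_e = 1`, the automorphisms
`σ : G → Aut(D)` form a group morphism (as `D` is commutative, `σ_{gh} = σ_g σ_h`),
`α : G × G → D \ {0}` satisfies `u_g r = σ_g(r) u_g`, `u_g u_h = α(g,h) u_{gh}`,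
`α(g,e) = α(e,g) = 1` and the 2-cocycle relation, and `A = ⊕_g D u_g` (the
`basis` field).  The kernel of the twist is `W = {g : σ_g = 1}`. -/
structure CrysDom (G D A : Type*) [Group G] [CommRing D] [IsDomain D] [Ring A] where
  ι : D →+* A
  inj : Function.Injective ι
  u : G → A
  σ : G →* RingAut D
  α : G → G → D
  α_ne_zero : ∀ g h : G, α g h ≠ 0
  u_one : u 1 = 1
  comm : ∀ (g : G) (r : D), u g * ι r = ι (σ g r) * u g
  mul_u : ∀ g h : G, u g * u h = ι (α g h) * u (g * h)
  α_one_left : ∀ g : G, α 1 g = 1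
  α_one_right : ∀ g : G, α g 1 = 1
  cocycle : ∀ g h t : G, α g h * α (g * h) t = σ g (α h t) * α g (h * t)
  basis : Function.Bijective (fun f : G →₀ D => f.sum fun g r => ι r * u g)

namespace CrysDom

variable {G D A : Type*} [Group G] [Fintype G] [CommRing D] [IsDomain D] [Ring A]
  (P : CrysDom G D A)

theorem sum_injective : Function.Injective fun a : G → D => ∑ s, P.ι (a s) * P.u s := by
  intro a b hab
  have h : Finsupp.equivFunOnFinite.symm a = Finsupp.equivFunOnFinite.symm b := by
    apply P.basis.injective
    dsimp only
    rw [Finsupp.sum_fintype _ _ (fun g => by simp), Finsupp.sum_fintype _ _ (fun g => by simp)]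
    simpa using hab
  simpa using congrArg Finsupp.equivFunOnFinite h

theorem ι_mul_sum (d : D) (r : G → D) :
    P.ι d * ∑ s, P.ι (r s) * P.u s = ∑ s, P.ι (d * r s) * P.u s := by
  simp only [Finset.mul_sum, map_mul, mul_assoc]

theorem sum_mul_ι (r : G → D) (d : D) :
    (∑ s, P.ι (r s) * P.u s) * P.ι d = ∑ s, P.ι (r s * P.σ s d) * P.u s := by
  simp only [Finset.sum_mul, mul_assoc, P.comm, map_mul]

/-- Commuting with `ι d` and comparing coefficients gives `d r_s = r_s σ_s(d)`. -/
theorem coeff_mul_sub_eq_zero_of_mem_center {r : G → D}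
    (h : (∑ s, P.ι (r s) * P.u s) ∈ Subring.center A) (s : G) (d : D) :
    r s * (P.σ s d - d) = 0 := by
  have hd : (∑ t, P.ι (d * r t) * P.u t) = ∑ t, P.ι (r t * P.σ t d) * P.u t := by
    rw [← P.ι_mul_sum, ← P.sum_mul_ι]
    exact Subring.mem_center_iff.mp h (P.ι d)
  have hs := congrFun (P.sum_injective hd) s
  linear_combination -hs

end CrysDom

/-- If `Σ_{s ∈ G} r_s u_s` is central in `A = D ◊_{σ,α} G` (`D` a commutative
domain, `G` finite), then `r_s = 0` for all `s ∉ W = Ker σ`. -/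
theorem central_supported_on_kernel {G D A : Type*} [Group G] [Fintype G]
    [CommRing D] [IsDomain D] [Ring A] (P : CrysDom G D A) (r : G → D)
    (h : (∑ s : G, P.ι (r s) * P.u s) ∈ Subring.center A) :
    ∀ s : G, P.σ s ≠ 1 → r s = 0 := by
  intro s hs
  obtain ⟨d, hd⟩ := DFunLike.ne_iff.mp hs
  exact (mul_eq_zero.mp (P.coeff_mul_sub_eq_zero_of_mem_center h s d)).resolve_right
    (sub_ne_zero.mpr hd)
end

section
/- Let A = R ◊_{σ,α} G be a crystalline graded ring with R a commutative domain and G finite, W = Ker σ. An element Σ_{s∈G} r_s u_s lies in Z(A) if and only if r_s = 0 for all s ∉ W and σ_x(r_s)·α(x,s) = r_{xsx^{-1}}·α(xsx^{-1},x) for all x ∈ G and s ∈ W. -/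
/-!
Every element of `A` is `Σ f_g u_g`, so `a = Σ r_s u_s` is central iff it commutes with every
`ι d` and every `u_x`. Comparing coefficients, `ι d · a = a · ι d` says `d r_s = r_s σ_s(d)`, which
in the domain `D` forces `r_s = 0` whenever `σ_s ≠ 1`; and `u_x · a = a · u_x` says
`σ_x(r_s) α(x,s) = r_{xsx⁻¹} α(xsx⁻¹,x)` for all `s`. Since `W = Ker σ` is normal, both sides of
the latter vanish for `s ∉ W` once the support condition holds.
-/

namespace CrysDom

variable {G D A : Type*} [Group G] [CommRing D] [IsDomain D] [Ring A] (P : CrysDom G D A)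

theorem σ_eq_one_of_conj_eq_one {x s : G} (h : P.σ (x * s * x⁻¹) = 1) : P.σ s = 1 := by
  simpa [mul_assoc] using (MonoidHom.normal_ker P.σ).conj_mem' _ h x

variable [Fintype G]

def ofFun (r : G → D) : A := ∑ s : G, P.ι (r s) * P.u s

theorem ofFun_eq_finsuppSum (r : G → D) :
    P.ofFun r = (Finsupp.equivFunOnFinite.symm r).sum fun g c => P.ι c * P.u g := by
  rw [Finsupp.sum_fintype _ _ fun g => by simp]
  simp [ofFun]

theorem ofFun_injective : Function.Injective P.ofFun := fun r r' h =>
  Finsupp.equivFunOnFinite.symm.injective <| P.basis.injective <| by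
    simpa only [ofFun_eq_finsuppSum] using h

theorem ofFun_surjective : Function.Surjective P.ofFun := fun a => by
  obtain ⟨c, rfl⟩ := P.basis.surjective a
  exact ⟨c, by simp [ofFun_eq_finsuppSum]⟩

theorem ι_mul_ofFun (r : G → D) (d : D) :
    P.ι d * P.ofFun r = P.ofFun fun s => d * r s := by
  simp only [ofFun, Finset.mul_sum, ← mul_assoc, ← map_mul]

theorem ofFun_mul_ι (r : G → D) (d : D) :
    P.ofFun r * P.ι d = P.ofFun fun s => r s * P.σ s d := by
  simp only [ofFun, Finset.sum_mul]
  refine Finset.sum_congr rfl fun s _ => ?_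
  rw [mul_assoc, P.comm, ← mul_assoc, ← map_mul]

theorem u_mul_ofFun (r : G → D) (x : G) :
    P.u x * P.ofFun r = P.ofFun fun g => P.σ x (r (x⁻¹ * g)) * P.α x (x⁻¹ * g) := by
  rw [ofFun, ofFun, Finset.mul_sum]
  refine Fintype.sum_equiv (Equiv.mulLeft x) _ _ fun s => ?_
  simp only [Equiv.coe_mulLeft, inv_mul_cancel_left]
  rw [← mul_assoc, P.comm, mul_assoc, P.mul_u, ← mul_assoc, ← map_mul]

theorem ofFun_mul_u (r : G → D) (x : G) :
    P.ofFun r * P.u x = P.ofFun fun g => r (g * x⁻¹) * P.α (g * x⁻¹) x := by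
  rw [ofFun, ofFun, Finset.sum_mul]
  refine Fintype.sum_equiv (Equiv.mulRight x) _ _ fun s => ?_
  simp only [Equiv.coe_mulRight, mul_inv_cancel_right]
  rw [mul_assoc, P.mul_u, ← mul_assoc, ← map_mul]

theorem mem_center_iff_commute_ι_and_u (a : A) :
    a ∈ Subring.center A ↔ (∀ d, Commute (P.ι d) a) ∧ ∀ x, Commute (P.u x) a := by
  refine ⟨fun h => ⟨fun d => Subring.mem_center_iff.mp h _,
    fun x => Subring.mem_center_iff.mp h _⟩, fun ⟨hι, hu⟩ => ?_⟩
  refine Subring.mem_center_iff.mpr fun b => ?_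
  obtain ⟨f, rfl⟩ := P.ofFun_surjective b
  exact (Commute.sum_left _ _ _ fun g _ => (hι (f g)).mul_left (hu g)).eq

theorem commute_ι_ofFun_iff (r : G → D) :
    (∀ d, Commute (P.ι d) (P.ofFun r)) ↔ ∀ s, P.σ s ≠ 1 → r s = 0 := by
  simp only [Commute, SemiconjBy, ι_mul_ofFun, ofFun_mul_ι, P.ofFun_injective.eq_iff,
    funext_iff]
  refine ⟨fun h s hs => ?_, fun h d s => ?_⟩
  · obtain ⟨d, hd⟩ : ∃ d, P.σ s d ≠ d := by
      by_contra! hc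
      exact hs (RingEquiv.ext hc)
    have : r s * (P.σ s d - d) = 0 := by rw [mul_sub, ← h d s, mul_comm, sub_self]
    exact (mul_eq_zero.mp this).resolve_right (sub_ne_zero.mpr hd)
  · by_cases hs : P.σ s = 1
    · rw [hs, RingAut.one_apply, mul_comm]
    · simp [h s hs]

theorem commute_u_ofFun_iff (r : G → D) (x : G) :
    Commute (P.u x) (P.ofFun r) ↔
      ∀ s, P.σ x (r s) * P.α x s = r (x * s * x⁻¹) * P.α (x * s * x⁻¹) x := by
  simp only [Commute, SemiconjBy, u_mul_ofFun, ofFun_mul_u, P.ofFun_injective.eq_iff,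
    funext_iff]
  refine ⟨fun h s => by simpa using h (x * s), fun h g => ?_⟩
  simpa using h (x⁻¹ * g)

end CrysDom

open CrysDom in
/-- `Σ_{s ∈ G} r_s u_s ∈ Z(A)` iff `r_s = 0` for `s ∉ W = Ker σ` and
`σ_x(r_s) α(x,s) = r_{xsx⁻¹} α(xsx⁻¹,x)` for all `x ∈ G`, `s ∈ W`. -/
theorem central_iff {G D A : Type*} [Group G] [Fintype G]
    [CommRing D] [IsDomain D] [Ring A] (P : CrysDom G D A) (r : G → D) :
    (∑ s : G, P.ι (r s) * P.u s) ∈ Subring.center A ↔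
      ((∀ s : G, P.σ s ≠ 1 → r s = 0) ∧
        ∀ (x s : G), P.σ s = 1 →
          P.σ x (r s) * P.α x s = r (x * s * x⁻¹) * P.α (x * s * x⁻¹) x) := by
  change P.ofFun r ∈ _ ↔ _
  simp only [P.mem_center_iff_commute_ι_and_u, commute_ι_ofFun_iff, commute_u_ofFun_iff]
  refine and_congr_right fun hsupp => ⟨fun h x s _ => h x s, fun h x s => ?_⟩
  by_cases hs : P.σ s = 1
  · exact h x s hs
  · rw [hsupp s hs, hsupp _ fun hc => hs (P.σ_eq_one_of_conj_eq_one hc),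
    map_zero, zero_mul, zero_mul]
end

section
/- For x ∈ G conjugating a central homogeneous element: if 0 ≠ r_g u_g ∈ Z(A), so that σ_x(r_g) = r_g·f(g,x) for all x ∈ G where f(g,x) = α(g,x)/α(x,g) ∈ K (K the fraction field of R, G Abelian), then f(g,·) is a crossed homomorphism: f(g,xy) = f(g,x)·σ_x(f(g,y)) for all x,y ∈ G. -/
def IsCrossedHom {M K : Type*} [Monoid M] [Semiring K] (σ : M →* RingAut K) (c : M → K) :
    Prop :=
  ∀ x y : M, c (x * y) = c x * σ x (c y)

theorem isCrossedHom_of_map_eq_mul {M K : Type*} [Monoid M] [Semiring K] [IsLeftCancelMulZero K]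
    (σ : M →* RingAut K) {c : M → K} {r : K} (hr : r ≠ 0) (h : ∀ x, σ x r = r * c x) :
    IsCrossedHom σ c := by
  intro x y
  refine mul_left_cancel₀ hr ?_
  calc r * c (x * y) = σ (x * y) r := (h _).symm
    _ = σ x (σ y r) := by rw [map_mul]; rfl
    _ = σ x r * σ x (c y) := by rw [h, map_mul]
    _ = r * (c x * σ x (c y)) := by rw [h, mul_assoc]

theorem crossed_homomorphism_general {G K : Type*} [CommGroup G] [Field K]
    (σ : G →* RingAut K) (α : G → G → K)
    (g : G) (r : K) (hr : r ≠ 0)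
    (h : ∀ x : G, σ x r = r * (α g x / α x g)) :
    ∀ x y : G, α g (x * y) / α (x * y) g =
      (α g x / α x g) * σ x (α g y / α y g) :=
  isCrossedHom_of_map_eq_mul σ hr h

/-- Let `K` be the fraction field of a commutative domain `R`, `G` a finite Abelian
group acting on `K` by automorphisms `σ` (extended from `R`), and
`α : G × G → K \ {0}` the 2-cocycle.  Set `f(g,x) = α(g,x)/α(x,g)`.  If
`0 ≠ r_g` satisfies `σ_x(r_g) = r_g · f(g,x)` for all `x ∈ G` (i.e. `r_g u_g` is a
nonzero central homogeneous element), then `f(g,·)` is a crossed homomorphism: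
`f(g,xy) = f(g,x) · σ_x(f(g,y))` for all `x, y ∈ G`. -/
theorem crossed_homomorphism {G K : Type*} [CommGroup G] [Finite G] [Field K]
    (σ : G →* RingAut K) (α : G → G → K) (hα : ∀ g h : G, α g h ≠ 0)
    (g : G) (r : K) (hr : r ≠ 0)
    (h : ∀ x : G, σ x r = r * (α g x / α x g)) :
    ∀ x y : G, α g (x * y) / α (x * y) g =
      (α g x / α x g) * σ x (α g y / α y g) :=
  crossed_homomorphism_general σ α g r hr h
end

section
/- Let D be a Dedekind domain, G finite Abelian, A = D ◊_{σ,α} G crystalline graded, W = Ker σ, and B = D ◊_{σ,α} W the subring graded by W. Then Z(A) ⊆ Z(B), and Z(B) = Σ_{s ∈ W_reg} D u_s where W_reg = {s ∈ W : α(s,x) = α(x,s) for all x ∈ W}. -/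
/-- The subring `B = D ◊_{σ,α} W` of `A` graded by `W = Ker σ`: the subring
generated by the homogeneous components `D u_w`, `w ∈ W`. -/
def CrysDom.kernelPart {G D A : Type*} [Group G] [CommRing D] [IsDomain D] [Ring A]
    (P : CrysDom G D A) : Subring A :=
  Subring.closure {a : A | ∃ (d : D) (w : G), P.σ w = 1 ∧ a = P.ι d * P.u w}

/-!
Work in the coordinates `a = Σ_g ι(c_g) u_g` given by the `basis` field. The coefficient of
`a ι(r)` at `g` is `c_g σ_g(r)` and that of `ι(r) a` is `r c_g`; since `D` is a domain and
`σ_g ≠ 1` moves some `r`, an element commutes with `ι(D)` exactly when it is supported on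
`W`, and the elements supported on `W` are exactly those of `B`. For `x ∈ W`, comparing the
coefficients of `a u_x` and `u_x a` at `s x = x s` gives `c_s α(s, x) = c_s α(x, s)`, so an
element of `B` commutes with `B = ⟨ι(D), u_W⟩` exactly when it is supported on `W_reg`.
-/

namespace CrysDom

open Finsupp

section Group

variable {G D A : Type*} [Group G] [CommRing D] [IsDomain D] [Ring A] (P : CrysDom G D A)

def ofCoeff : (G →₀ D) →+ A where
  toFun c := c.sum fun g r => P.ι r * P.u g
  map_zero' := sum_zero_index
  map_add' _ _ := sum_add_index' (by simp) (by simp [add_mul])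

noncomputable def repr : A ≃+ (G →₀ D) := (AddEquiv.ofBijective P.ofCoeff P.basis).symm

lemma repr_eq_iff {a : A} {c : G →₀ D} :
    P.repr a = c ↔ a = c.sum fun g r => P.ι r * P.u g :=
  (AddEquiv.ofBijective P.ofCoeff P.basis).symm_apply_eq

lemma sum_repr (a : A) : ((P.repr a).sum fun g r => P.ι r * P.u g) = a :=
  (P.repr_eq_iff.1 rfl).symm

lemma repr_ι_mul_u (r : D) (g : G) : P.repr (P.ι r * P.u g) = single g r :=
  P.repr_eq_iff.2 (by simp)

lemma repr_one : P.repr 1 = single 1 1 := by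
  simpa [P.u_one] using P.repr_ι_mul_u 1 1

@[elab_as_elim]
lemma induction_on {p : A → Prop} (a : A) (zero : p 0) (add : ∀ a b, p a → p b → p (a + b))
    (basic : ∀ g r, p (P.ι r * P.u g)) : p a := by
  rw [← P.sum_repr a]
  induction P.repr a using Finsupp.induction with
  | zero => simpa using zero
  | single_add g r c _ _ ih =>
    rw [sum_add_index' (by simp) (by simp [add_mul]), sum_single_index (by simp)]
    exact add _ _ (basic g r) ih

lemma repr_ι_mul (r : D) (a : A) : P.repr (P.ι r * a) = r • P.repr a := by
  induction a using P.induction_on with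
  | zero => simp
  | add a b ha hb => simp [mul_add, ha, hb]
  | basic g s => rw [← mul_assoc, ← map_mul, repr_ι_mul_u, repr_ι_mul_u, smul_single, smul_eq_mul]

lemma repr_mul_ι (a : A) (r : D) (g : G) : P.repr (a * P.ι r) g = P.repr a g * P.σ g r := by
  induction a using P.induction_on with
  | zero => simp
  | add a b ha hb => simp [add_mul, ha, hb]
  | basic h s =>
    rw [mul_assoc, P.comm, ← mul_assoc, ← map_mul, repr_ι_mul_u, repr_ι_mul_u]
    rcases eq_or_ne h g with rfl | hne <;> simp [*]

lemma repr_u_mul (x : G) (a : A) (h : G) :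
    P.repr (P.u x * a) h = P.σ x (P.repr a (x⁻¹ * h)) * P.α x (x⁻¹ * h) := by
  induction a using P.induction_on with
  | zero => simp
  | add a b ha hb => simp [mul_add, add_mul, ha, hb]
  | basic g s =>
    rw [← mul_assoc, P.comm, mul_assoc, P.mul_u, ← mul_assoc, ← map_mul, repr_ι_mul_u,
      repr_ι_mul_u]
    rcases eq_or_ne (x * g) h with rfl | hne
    · simp
    · have : g ≠ x⁻¹ * h := by rintro rfl; simp at hne
      simp [hne, this]

lemma repr_mul_u (a : A) (x h : G) :
    P.repr (a * P.u x) h = P.repr a (h * x⁻¹) * P.α (h * x⁻¹) x := by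
  induction a using P.induction_on with
  | zero => simp
  | add a b ha hb => simp [add_mul, ha, hb]
  | basic g s =>
    rw [mul_assoc, P.mul_u, ← mul_assoc, ← map_mul, repr_ι_mul_u, repr_ι_mul_u]
    rcases eq_or_ne (g * x) h with rfl | hne
    · simp
    · have : g ≠ h * x⁻¹ := by rintro rfl; simp at hne
      simp [hne, this]

def IsKernelSupported (a : A) : Prop :=
  ∀ g ∈ (P.repr a).support, P.σ g = 1

lemma forall_commute_ι_iff (a : A) :
    (∀ r, Commute a (P.ι r)) ↔ P.IsKernelSupported a := by
  constructor
  · intro h g hg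
    by_contra hσ
    obtain ⟨r, hr⟩ : ∃ r, P.σ g r ≠ r := by
      by_contra! hfix
      exact hσ (RingEquiv.ext hfix)
    have hcoeff := congr(P.repr $(h r) g)
    rw [repr_mul_ι, repr_ι_mul, Finsupp.smul_apply, smul_eq_mul, mul_comm r] at hcoeff
    exact hr (mul_left_cancel₀ (mem_support_iff.1 hg) hcoeff)
  · intro h r
    apply P.repr.injective
    ext g
    rw [repr_mul_ι, repr_ι_mul, Finsupp.smul_apply, smul_eq_mul, mul_comm r]
    by_cases hg : g ∈ (P.repr a).support
    · rw [h g hg, RingAut.one_apply]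
    · rw [notMem_support_iff.1 hg, zero_mul, zero_mul]

lemma isKernelSupported_ι_mul_u_mul {d : D} {w : G} (hw : P.σ w = 1) {b : A}
    (hb : P.IsKernelSupported b) : P.IsKernelSupported (P.ι d * P.u w * b) := by
  intro g hg
  rw [mem_support_iff, mul_assoc, repr_ι_mul, Finsupp.smul_apply, repr_u_mul] at hg
  have hc : w⁻¹ * g ∈ (P.repr b).support := by
    rw [mem_support_iff]
    rintro hzero
    simp [hzero] at hg
  rw [← mul_inv_cancel_left w g, map_mul, hw, hb _ hc, one_mul]

lemma mem_kernelPart_iff {a : A} :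
    a ∈ P.kernelPart ↔ P.IsKernelSupported a := by
  constructor
  · intro ha
    -- Strengthened so that the product case of the closure induction goes through.
    suffices ∀ b, P.IsKernelSupported b → P.IsKernelSupported (a * b) by
      simpa using this 1 (by simp [IsKernelSupported, repr_one])
    induction ha using Subring.closure_induction with
    | mem _ hgen =>
      obtain ⟨d, w, hw, rfl⟩ := hgen
      exact fun b hb => P.isKernelSupported_ι_mul_u_mul hw hb
    | zero => simp [IsKernelSupported]
    | one => simp
    | add x y _ _ hx hy =>
      classical
      intro b hb g hg
      rw [add_mul, map_add] at hg
      rcases Finset.mem_union.1 (support_add hg) with hg | hg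
      exacts [hx b hb g hg, hy b hb g hg]
    | neg x _ hx => simpa [IsKernelSupported] using hx
    | mul x y _ _ hx hy => exact fun b hb => mul_assoc x y b ▸ hx _ (hy b hb)
  · intro h
    rw [← P.sum_repr a]
    refine AddSubmonoidClass.finsuppSum_mem _ _ _ fun g hg => ?_
    exact Subring.subset_closure ⟨_, g, h g (mem_support_iff.2 hg), rfl⟩

lemma u_mem_kernelPart {x : G} (hx : P.σ x = 1) : P.u x ∈ P.kernelPart :=
  Subring.subset_closure ⟨1, x, hx, by simp⟩

end Group

section CommGroup

variable {G D A : Type*} [CommGroup G] [CommRing D] [IsDomain D] [Ring A] (P : CrysDom G D A)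

lemma commute_u_iff {x : G} (hx : P.σ x = 1) (a : A) :
    Commute a (P.u x) ↔ ∀ s ∈ (P.repr a).support, P.α s x = P.α x s := by
  have hcoeff (s : G) : (P.repr (a * P.u x) (s * x) = P.repr (P.u x * a) (s * x)) ↔
      P.repr a s * P.α s x = P.repr a s * P.α x s := by
    rw [repr_mul_u, repr_u_mul, hx, RingAut.one_apply, mul_inv_cancel_right, mul_comm s,
      inv_mul_cancel_left]
  constructor
  · intro h s hs
    exact mul_left_cancel₀ (mem_support_iff.1 hs) ((hcoeff s).1 congr(P.repr $h (s * x)))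
  · intro h
    apply P.repr.injective
    ext t
    obtain ⟨s, rfl⟩ : ∃ s, s * x = t := ⟨t * x⁻¹, inv_mul_cancel_right t x⟩
    refine (hcoeff s).2 ?_
    by_cases hs : s ∈ (P.repr a).support
    · rw [h s hs]
    · rw [notMem_support_iff.1 hs, zero_mul, zero_mul]

lemma mem_kernelPart_and_forall_commute_iff (a : A) :
    (a ∈ P.kernelPart ∧ ∀ b ∈ P.kernelPart, Commute a b) ↔
      ∀ s ∈ (P.repr a).support, P.σ s = 1 ∧ ∀ x, P.σ x = 1 → P.α s x = P.α x s := by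
  rw [P.mem_kernelPart_iff]
  constructor
  · rintro ⟨hW, hcomm⟩ s hs
    exact ⟨hW s hs, fun x hx => (P.commute_u_iff hx a).1 (hcomm _ (P.u_mem_kernelPart hx)) s hs⟩
  · intro h
    have hW : P.IsKernelSupported a := fun s hs => (h s hs).1
    refine ⟨hW, fun b hb => ?_⟩
    have hle : P.kernelPart ≤ Subring.centralizer {a} := by
      refine Subring.closure_le.2 ?_
      rintro _ ⟨d, x, hx, rfl⟩
      rw [SetLike.mem_coe, Subring.mem_centralizer_iff]
      intro _ hg
      rw [Set.mem_singleton_iff.1 hg]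
      exact ((P.forall_commute_ι_iff a).2 hW d).mul_right
        ((P.commute_u_iff hx a).2 fun s hs => (h s hs).2 x hx)
    exact Subring.mem_centralizer_iff.1 (hle hb) a rfl

end CommGroup

end CrysDom

theorem center_of_kernel_part_general {G D A : Type*} [CommGroup G]
    [CommRing D] [IsDomain D] [Ring A] (P : CrysDom G D A) :
    (∀ a ∈ Subring.center A, a ∈ P.kernelPart ∧
        ∀ b ∈ P.kernelPart, a * b = b * a) ∧
    {a : A | a ∈ P.kernelPart ∧ ∀ b ∈ P.kernelPart, a * b = b * a} =
      {a : A | ∃ c : G →₀ D,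
        (∀ s ∈ c.support, P.σ s = 1 ∧ ∀ x : G, P.σ x = 1 → P.α s x = P.α x s) ∧
        a = c.sum fun s d => P.ι d * P.u s} := by
  refine ⟨fun a ha => ⟨?_, fun b _ => (Subring.mem_center_iff.1 ha b).symm⟩, ?_⟩
  · rw [P.mem_kernelPart_iff, ← P.forall_commute_ι_iff]
    exact fun r => (Subring.mem_center_iff.1 ha (P.ι r)).symm
  · ext a
    simp only [Set.mem_ofPred_eq, ← P.repr_eq_iff, exists_eq_right']
    exact P.mem_kernelPart_and_forall_commute_iff a

/-- Let `D` be a Dedekind domain, `G` finite Abelian, `A = D ◊_{σ,α} G`,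
`W = Ker σ` and `B = D ◊_{σ,α} W ⊆ A`.  Then `Z(A) ⊆ Z(B)` and
`Z(B) = Σ_{s ∈ W_reg} D u_s`, where
`W_reg = {s ∈ W : α(s,x) = α(x,s) for all x ∈ W}`. -/
theorem center_of_kernel_part {G D A : Type*} [CommGroup G] [Fintype G]
    [CommRing D] [IsDomain D] [IsDedekindDomain D] [Ring A] (P : CrysDom G D A) :
    (∀ a ∈ Subring.center A, a ∈ P.kernelPart ∧
        ∀ b ∈ P.kernelPart, a * b = b * a) ∧
    {a : A | a ∈ P.kernelPart ∧ ∀ b ∈ P.kernelPart, a * b = b * a} =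
      {a : A | ∃ c : G →₀ D,
        (∀ s ∈ c.support, P.σ s = 1 ∧ ∀ x : G, P.σ x = 1 → P.α s x = P.α x s) ∧
        a = c.sum fun s d => P.ι d * P.u s} :=
  center_of_kernel_part_general P
end

section
/- Let G be finite Abelian, A = D ◊_{σ,α} G. If W ∩ G_reg = {e} and for every s ∈ W_reg∖G_reg there is no d ∈ D∖{0} with σ_x(d)/d = f(x,s) for all x ∈ G with α(x,s) ≠ α(s,x), then Z(A) = D^G. -/
/-!
Write a central element as `a = ∑_g ι(c_g) u_g`. Commuting with `ι D` forces `σ_g = 1` whenever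
`c_g ≠ 0`, and commuting with `u_x` forces `σ_x(c_g) α(x,g) = c_g α(g,x)` for all `x`. For `g ≠ e`
with `c_g ≠ 0`, the cocycle identity turns this into `σ_x(d)/d = f(x,g⁻¹)` for
`d = α(g⁻¹,g) c_g ≠ 0`; then `g⁻¹ ∈ W_reg`, and it is either `α`-regular in `G`, contradicting
`W ∩ G_reg = {e}`, or a solution excluded by hypothesis. Hence `a = ι(c_e)`, and `c_e` is fixed
because `ι(c_e)` commutes with every `u_x`.
-/

namespace Finsupp

lemma sum_single_apply_of_injective {α β M N : Type*} [Zero M] [AddCommMonoid N]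
    (f : α →₀ M) {t : α → β} (ht : Function.Injective t) (c : α → M → N)
    (hc : ∀ a, c a 0 = 0) (a : α) :
    (f.sum fun b r => single (t b) (c b r)) (t a) = c a (f a) := by
  classical
  rw [sum_apply, Finsupp.sum, Finset.sum_eq_single a]
  · exact single_eq_same
  · exact fun b _ hba => single_eq_of_ne (ht.ne hba).symm
  · intro ha
    rw [notMem_support_iff.mp ha, hc, single_zero, zero_apply]

end Finsupp

namespace CrysDom

section Group

variable {G D A : Type*} [Group G] [CommRing D] [IsDomain D] [Ring A] (P : CrysDom G D A)

noncomputable def ofCoeffs (f : G →₀ D) : A := f.sum fun g r => P.ι r * P.u g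

/-- `σ_x(d)/d = f(x,s)` for all `x`, with the denominators cleared. -/
def IsFSolution (s : G) (d : D) : Prop := ∀ x : G, P.σ x d * P.α s x = d * P.α x s

lemma ofCoeffs_surjective : Function.Surjective P.ofCoeffs := P.basis.surjective

lemma ofCoeffs_injective : Function.Injective P.ofCoeffs := P.basis.injective

lemma ofCoeffs_single (g : G) (r : D) : P.ofCoeffs (Finsupp.single g r) = P.ι r * P.u g := by
  rw [ofCoeffs, Finsupp.sum_single_index (by rw [map_zero, zero_mul])]

lemma ofCoeffs_eq_ι_of_forall_ne_one {f : G →₀ D} (hf : ∀ g ≠ 1, f g = 0) :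
    P.ofCoeffs f = P.ι (f 1) := by
  have hf1 : f = Finsupp.single 1 (f 1) := by
    ext g
    by_cases hg : g = 1
    · rw [hg, Finsupp.single_eq_same]
    · rw [hf g hg, Finsupp.single_eq_of_ne hg]
  rw [hf1, ofCoeffs_single, P.u_one, mul_one, Finsupp.single_eq_same]

lemma ι_mul_u_left_injective (x : G) : Function.Injective fun r => P.ι r * P.u x := by
  intro r r' h
  refine Finsupp.single_injective x (P.ofCoeffs_injective ?_)
  simpa only [ofCoeffs_single] using h

lemma ofCoeffs_sum_single (f : G →₀ D) (t : G → G) (c : G → D → D) :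
    P.ofCoeffs (f.sum fun g r => Finsupp.single (t g) (c g r)) =
      f.sum fun g r => P.ι (c g r) * P.u (t g) := by
  rw [ofCoeffs, Finsupp.sum_sum_index (fun _ => by rw [map_zero, zero_mul])
    (fun _ _ _ => by rw [map_add, add_mul])]
  exact Finset.sum_congr rfl fun g _ => P.ofCoeffs_single _ _

lemma coeff_eq_of_sum_eq (f : G →₀ D) {t : G → G} (ht : Function.Injective t)
    {c c' : G → D → D} (hc : ∀ g, c g 0 = 0) (hc' : ∀ g, c' g 0 = 0)
    (h : (f.sum fun g r => P.ι (c g r) * P.u (t g)) =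
      f.sum fun g r => P.ι (c' g r) * P.u (t g)) (g : G) :
    c g (f g) = c' g (f g) := by
  rw [← P.ofCoeffs_sum_single f t c, ← P.ofCoeffs_sum_single f t c'] at h
  rw [← Finsupp.sum_single_apply_of_injective f ht c hc,
    ← Finsupp.sum_single_apply_of_injective f ht c' hc', P.ofCoeffs_injective h]

lemma ofCoeffs_mul_ι (f : G →₀ D) (d : D) :
    P.ofCoeffs f * P.ι d = f.sum fun g r => P.ι (r * P.σ g d) * P.u g := by
  rw [ofCoeffs, Finsupp.sum_mul]
  refine Finset.sum_congr rfl fun g _ => ?_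
  dsimp only
  rw [mul_assoc, P.comm, ← mul_assoc, ← map_mul]

lemma ι_mul_ofCoeffs (f : G →₀ D) (d : D) :
    P.ι d * P.ofCoeffs f = f.sum fun g r => P.ι (d * r) * P.u g := by
  rw [ofCoeffs, Finsupp.mul_sum]
  exact Finset.sum_congr rfl fun g _ => by dsimp only; rw [← mul_assoc, ← map_mul]

lemma ofCoeffs_mul_u (f : G →₀ D) (x : G) :
    P.ofCoeffs f * P.u x = f.sum fun g r => P.ι (r * P.α g x) * P.u (g * x) := by
  rw [ofCoeffs, Finsupp.sum_mul]
  refine Finset.sum_congr rfl fun g _ => ?_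
  dsimp only
  rw [mul_assoc, P.mul_u, ← mul_assoc, ← map_mul]

lemma u_mul_ofCoeffs (f : G →₀ D) (x : G) :
    P.u x * P.ofCoeffs f = f.sum fun g r => P.ι (P.σ x r * P.α x g) * P.u (x * g) := by
  rw [ofCoeffs, Finsupp.mul_sum]
  refine Finset.sum_congr rfl fun g _ => ?_
  dsimp only
  rw [← mul_assoc, P.comm, mul_assoc, P.mul_u, ← mul_assoc, ← map_mul]

lemma σ_eq_one_of_commute_ι {f : G →₀ D} (h : ∀ d, Commute (P.ofCoeffs f) (P.ι d)) {g : G}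
    (hg : f g ≠ 0) : P.σ g = 1 := by
  refine RingEquiv.ext fun d => mul_left_cancel₀ hg ?_
  have hcoeff := P.coeff_eq_of_sum_eq f Function.injective_id (c := fun g r => r * P.σ g d)
    (c' := fun _ r => d * r) (fun _ => zero_mul _) (fun _ => mul_zero _)
    ((P.ofCoeffs_mul_ι f d).symm.trans ((h d).eq.trans (P.ι_mul_ofCoeffs f d))) g
  rw [hcoeff, mul_comm]
  rfl

lemma ι_mem_center_iff (c : D) : P.ι c ∈ Subring.center A ↔ ∀ x : G, P.σ x c = c := by
  rw [Subring.mem_center_iff]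
  constructor
  · intro h x
    exact P.ι_mul_u_left_injective x ((P.comm x c).symm.trans (h (P.u x)))
  · intro h b
    obtain ⟨f, rfl⟩ := P.ofCoeffs_surjective b
    rw [ofCoeffs_mul_ι, ι_mul_ofCoeffs]
    exact Finset.sum_congr rfl fun g _ => by dsimp only; rw [h g, mul_comm]

lemma α_comm_of_isFSolution {s : G} {d : D} (hd : P.IsFSolution s d) (hd0 : d ≠ 0) {x : G}
    (hx : P.σ x = 1) : P.α s x = P.α x s := by
  have h := hd x
  rw [hx] at h
  exact mul_left_cancel₀ hd0 h

end Group

section CommGroup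

variable {G D A : Type*} [CommGroup G] [CommRing D] [IsDomain D] [Ring A] (P : CrysDom G D A)

lemma σ_mul_α_of_commute_u {f : G →₀ D} {x : G} (h : Commute (P.ofCoeffs f) (P.u x)) (g : G) :
    P.σ x (f g) * P.α x g = f g * P.α g x := by
  have hux := P.u_mul_ofCoeffs f x
  simp_rw [mul_comm x] at hux
  exact (P.coeff_eq_of_sum_eq f (mul_left_injective x) (c := fun g r => r * P.α g x)
    (c' := fun g r => P.σ x r * P.α x g) (fun _ => zero_mul _)
    (fun _ => by rw [map_zero, zero_mul])
    ((P.ofCoeffs_mul_u f x).symm.trans (h.eq.trans hux)) g).symm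

lemma isFSolution_inv {g : G} (hg : P.σ g = 1) {c : D}
    (hc : ∀ x, P.σ x c * P.α x g = c * P.α g x) :
    P.IsFSolution g⁻¹ (P.α g⁻¹ g * c) := by
  have hg' : P.σ g⁻¹ = 1 := by rw [map_inv, hg, inv_one]
  intro x
  have h₁ : P.α g⁻¹ g = P.α g x * P.α g⁻¹ (g * x) := by
    simpa [P.α_one_left, hg'] using P.cocycle g⁻¹ g x
  have h₂ : P.α x g⁻¹ * P.α (g⁻¹ * x) g = P.σ x (P.α g⁻¹ g) := by
    simpa [P.α_one_right, mul_comm x g⁻¹] using P.cocycle x g⁻¹ g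
  have h₃ : P.α g⁻¹ x * P.α (g⁻¹ * x) g = P.α x g * P.α g⁻¹ (g * x) := by
    simpa [hg', mul_comm x g] using P.cocycle g⁻¹ x g
  rw [map_mul]
  linear_combination (P.σ x c * P.α g⁻¹ x) * h₂.symm + (P.σ x c * P.α x g⁻¹) * h₃ +
    (P.α x g⁻¹ * P.α g⁻¹ (g * x)) * hc x - (c * P.α x g⁻¹) * h₁

lemma exists_isFSolution_inv_of_mem_center {f : G →₀ D} (ha : P.ofCoeffs f ∈ Subring.center A)
    {g : G} (hg : f g ≠ 0) :
    P.σ g⁻¹ = 1 ∧ ∃ d ≠ 0, P.IsFSolution g⁻¹ d := by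
  have hcomm : ∀ b : A, Commute (P.ofCoeffs f) b := fun b => (Subring.mem_center_iff.1 ha b).symm
  have hσ : P.σ g = 1 := P.σ_eq_one_of_commute_ι (fun d => hcomm _) hg
  exact ⟨by rw [map_inv, hσ, inv_one], _, mul_ne_zero (P.α_ne_zero g⁻¹ g) hg,
    P.isFSolution_inv hσ fun x => P.σ_mul_α_of_commute_u (hcomm _) g⟩

end CommGroup

end CrysDom

open CrysDom in
theorem center_trivial_general {G D A : Type*} [CommGroup G]
    [CommRing D] [IsDomain D] [Ring A] (P : CrysDom G D A)
    (h1 : ∀ s : G, P.σ s = 1 → (∀ x : G, P.α s x = P.α x s) → s = 1)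
    (h2 : ∀ s : G, (P.σ s = 1 ∧ ∀ x : G, P.σ x = 1 → P.α s x = P.α x s) →
      (∃ x : G, P.α x s ≠ P.α s x) →
      ¬∃ d : D, d ≠ 0 ∧ ∀ x : G, P.α x s ≠ P.α s x →
        P.σ x d * P.α s x = d * P.α x s) :
    (Subring.center A : Set A) = P.ι '' {d : D | ∀ x : G, P.σ x d = d} := by
  have hsupp : ∀ f : G →₀ D, P.ofCoeffs f ∈ Subring.center A → ∀ g ≠ 1, f g = 0 := by
    intro f ha g hg1
    by_contra hg
    obtain ⟨hσ, d, hd0, hd⟩ := P.exists_isFSolution_inv_of_mem_center ha hg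
    by_cases hreg : ∀ x, P.α g⁻¹ x = P.α x g⁻¹
    · exact hg1 (inv_eq_one.mp (h1 _ hσ hreg))
    · push Not at hreg
      obtain ⟨x₀, hx₀⟩ := hreg
      exact h2 g⁻¹ ⟨hσ, fun x hx => P.α_comm_of_isFSolution hd hd0 hx⟩ ⟨x₀, Ne.symm hx₀⟩
        ⟨d, hd0, fun x _ => hd x⟩
  ext a
  constructor
  · intro ha
    obtain ⟨f, rfl⟩ := P.ofCoeffs_surjective a
    have hf := P.ofCoeffs_eq_ι_of_forall_ne_one (hsupp f ha)
    rw [SetLike.mem_coe, hf, ι_mem_center_iff] at ha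
    exact ⟨f 1, ha, hf.symm⟩
  · rintro ⟨c, hc, rfl⟩
    exact (P.ι_mem_center_iff c).2 hc

/-- Triviality of the center: if `W ∩ G_reg = {e}` and for every
`s ∈ W_reg \ G_reg` there is no `0 ≠ d ∈ D` with `σ_x(d)/d = f(x,s)` (i.e.
`σ_x(d)·α(s,x) = d·α(x,s)`) for all `x` with `α(x,s) ≠ α(s,x)`, then
`Z(A) = D^G`.  Here `W = Ker σ`, `G_reg`, `W_reg` are the `α`-regular elements of
`G` resp. `W`, and `D^G` is the fixed subring. -/
theorem center_trivial {G D A : Type*} [CommGroup G] [Fintype G]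
    [CommRing D] [IsDomain D] [IsDedekindDomain D] [Ring A] (P : CrysDom G D A)
    (h1 : ∀ s : G, P.σ s = 1 → (∀ x : G, P.α s x = P.α x s) → s = 1)
    (h2 : ∀ s : G, (P.σ s = 1 ∧ ∀ x : G, P.σ x = 1 → P.α s x = P.α x s) →
      (∃ x : G, P.α x s ≠ P.α s x) →
      ¬∃ d : D, d ≠ 0 ∧ ∀ x : G, P.α x s ≠ P.α s x →
        P.σ x d * P.α s x = d * P.α x s) :
    (Subring.center A : Set A) = P.ι '' {d : D | ∀ x : G, P.σ x d = d} :=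
  center_trivial_general P h1 h2
end

section
/- If the 2-cocycle α satisfies the universal regularity condition on W (f(x,s) = 1 for all regular s and all x ∈ W), then W_reg is closed under conjugation by G: for all x ∈ G and s ∈ W_reg, xsx^{-1} ∈ W_reg. -/
/-- A crystalline graded ring `A = K ◊_{σ,α} G` over a field `K`: `K` embeds in `A`
via `ι`, the `u_g` are units of `A`, `σ : G → Aut(K)` (a group morphism, since `K`
is commutative `σ_{gh} = σ_g σ_h`), `α : G × G → K^×` with `u_g r = σ_g(r) u_g`,
`u_g u_h = α(g,h) u_{gh}`, `α(g,e) = α(e,g) = 1`, the 2-cocycle relation, and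
`α(g,g⁻¹) = σ_g(α(g⁻¹,g))`; `A = ⊕_{g} K u_g` via `basis`. -/
structure CrysField (G K A : Type*) [Group G] [Field K] [Ring A] where
  ι : K →+* A
  inj : Function.Injective ι
  u : G → Aˣ
  σ : G →* RingAut K
  α : G → G → Kˣ
  u_one : u 1 = 1
  comm : ∀ (g : G) (r : K), (u g : A) * ι r = ι (σ g r) * (u g : A)
  mul_u : ∀ g h : G, (u g : A) * (u h : A) = ι (α g h) * (u (g * h) : A)
  α_one_left : ∀ g : G, α 1 g = 1
  α_one_right : ∀ g : G, α g 1 = 1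
  cocycle : ∀ g h t : G, (α g h : K) * α (g * h) t = σ g (α h t) * α g (h * t)
  α_inv : ∀ g : G, (α g g⁻¹ : K) = σ g (α g⁻¹ g)
  basis : Function.Bijective (fun f : G →₀ K => f.sum fun g r => ι r * (u g : A))

/- For `k ∈ W` commuting with `t = x s x⁻¹`, the element `w = x⁻¹ k x ∈ W` commutes with `s`, and
`s ∈ W_reg` gives `α(w,s) = α(s,w)`, i.e. `u_w u_s = u_s u_w`. Conjugation by `u_x` sends `u_g` to
`c_g u_{xgx⁻¹}` for a scalar `c_g`; scalars commute with `u_k` and `u_t` because `k, t ∈ Ker σ`, so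
`u_k u_t = u_t u_k`, i.e. `α(k,t) = α(t,k)`. Thus `t` is regular, and the regularity condition puts it
in `W_reg`. -/

theorem Commute.of_mul_mul_of_commute {M : Type*} [CancelMonoid M] {a b c d : M}
    (h : Commute (c * a) (d * b)) (hcd : Commute c d) (hcb : Commute c b) (hda : Commute d a) :
    Commute a b := by
  have : c * d * (a * b) = c * d * (b * a) := by
    calc c * d * (a * b) = c * a * (d * b) := by rw [hda.mul_mul_mul_comm]
      _ = d * b * (c * a) := h.eq
      _ = c * d * (b * a) := by rw [← hcb.mul_mul_mul_comm, hcd.eq]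
  exact mul_left_cancel this

namespace CrysField

variable {G K A : Type*} [Group G] [Field K] [Ring A] (P : CrysField G K A)

def unitsι : Kˣ →* Aˣ := Units.map P.ι.toMonoidHom

@[simp]
lemma coe_unitsι (r : Kˣ) : (P.unitsι r : A) = P.ι r := rfl

lemma unitsι_injective : Function.Injective P.unitsι :=
  Units.map_injective P.inj

lemma u_mul_u (g h : G) : P.u g * P.u h = P.unitsι (P.α g h) * P.u (g * h) :=
  Units.ext (P.mul_u g h)

lemma commute_u_unitsι {g : G} (hg : P.σ g = 1) (r : Kˣ) : Commute (P.u g) (P.unitsι r) :=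
  Units.ext (by simpa [hg] using P.comm g r)

lemma σ_conj_eq_one (x : G) {g : G} (hg : P.σ g = 1) : P.σ (x * g * x⁻¹) = 1 := by
  simp [hg]

lemma u_conj (x g : G) :
    P.u x * P.u g * (P.u x)⁻¹ = P.unitsι (P.α x g / P.α (x * g * x⁻¹) x) * P.u (x * g * x⁻¹) := by
  have h := P.u_mul_u (x * g * x⁻¹) x
  rw [show x * g * x⁻¹ * x = x * g by group] at h
  rw [P.u_mul_u, eq_inv_mul_of_mul_eq h.symm, map_div, div_eq_mul_inv]
  group

lemma commute_u_iff {g h : G} (hgh : g * h = h * g) :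
    Commute (P.u g) (P.u h) ↔ P.α g h = P.α h g := by
  rw [Commute, SemiconjBy, P.u_mul_u, P.u_mul_u, hgh, mul_left_inj, P.unitsι_injective.eq_iff]

lemma commute_u_conj (x : G) {g h : G} (hg : P.σ g = 1) (hh : P.σ h = 1)
    (hgh : Commute (P.u g) (P.u h)) : Commute (P.u (x * g * x⁻¹)) (P.u (x * h * x⁻¹)) := by
  have hconj := hgh.conj (P.u x)
  rw [P.u_conj, P.u_conj] at hconj
  refine hconj.of_mul_mul_of_commute ((Commute.all _ _).map _) ?_ ?_
  · exact (P.commute_u_unitsι (P.σ_conj_eq_one x hh) _).symm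
  · exact (P.commute_u_unitsι (P.σ_conj_eq_one x hg) _).symm

lemma α_conj_comm (x : G) {g h : G} (hg : P.σ g = 1) (hh : P.σ h = 1) (hgh : g * h = h * g)
    (hα : P.α g h = P.α h g) :
    P.α (x * g * x⁻¹) (x * h * x⁻¹) = P.α (x * h * x⁻¹) (x * g * x⁻¹) := by
  have hgh' : x * g * x⁻¹ * (x * h * x⁻¹) = x * h * x⁻¹ * (x * g * x⁻¹) := by
    simp only [mul_assoc, inv_mul_cancel_left]
    rw [← mul_assoc g, hgh, mul_assoc]
  exact (P.commute_u_iff hgh').1 (P.commute_u_conj x hg hh ((P.commute_u_iff hgh).2 hα))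

end CrysField

theorem Wreg_conj_stable_general {G K A : Type*} [Group G] [Field K] [Ring A]
    (P : CrysField G K A)
    (hURC : ∀ s : G, P.σ s = 1 →
      (∀ k : G, P.σ k = 1 → k * s = s * k → (P.α k s : K) = P.α s k) →
      ∀ x : G, P.σ x = 1 → (P.α x s : K) = P.α (x * s * x⁻¹) x)
    (x s : G)
    (hs : P.σ s = 1 ∧ ∀ k : G, P.σ k = 1 →
      (P.α k s : K) = P.α (k * s * k⁻¹) k) :
    P.σ (x * s * x⁻¹) = 1 ∧ ∀ k : G, P.σ k = 1 →
      (P.α k (x * s * x⁻¹) : K) = P.α (k * (x * s * x⁻¹) * k⁻¹) k := by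
  obtain ⟨hσs, hs_reg⟩ := hs
  have hσt := P.σ_conj_eq_one x hσs
  refine ⟨hσt, hURC _ hσt fun k hk hkt => ?_⟩
  set w := x⁻¹ * k * x
  have hxw : x * w * x⁻¹ = k := by simp only [w]; group
  have hσw : P.σ w = 1 := by simp [w, hk]
  have hws : w * s = s * w :=
    calc w * s = x⁻¹ * (k * (x * s * x⁻¹)) * x := by simp only [w]; group
      _ = x⁻¹ * (x * s * x⁻¹ * k) * x := by rw [hkt]
      _ = s * w := by simp only [w]; group
  have hα : P.α w s = P.α s w := by
    simpa [hws] using Units.ext (hs_reg w hσw)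
  simpa [hxw] using congrArg Units.val (P.α_conj_comm x hσw hσs hws hα)

/-- If the 2-cocycle `α` satisfies the universal regularity condition on
`W = Ker σ` (`f(x,s) = 1` for all `α`-regular `s ∈ W` and all `x ∈ W`, where
`f(x,g) = α(x,g)/α(xgx⁻¹,x)`, and `s ∈ W` is regular iff `α(k,s) = α(s,k)` for
all `k ∈ C_W(s)`), then `W_reg = {g ∈ W : f(x,g) = 1 ∀ x ∈ W}` is closed under
conjugation by `G`: for all `x ∈ G` and `s ∈ W_reg`, `xsx⁻¹ ∈ W_reg`. -/
theorem Wreg_conj_stable {G K A : Type*} [Group G] [Fintype G] [Field K] [Ring A]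
    (P : CrysField G K A)
    (hURC : ∀ s : G, P.σ s = 1 →
      (∀ k : G, P.σ k = 1 → k * s = s * k → (P.α k s : K) = P.α s k) →
      ∀ x : G, P.σ x = 1 → (P.α x s : K) = P.α (x * s * x⁻¹) x)
    (x s : G)
    (hs : P.σ s = 1 ∧ ∀ k : G, P.σ k = 1 →
      (P.α k s : K) = P.α (k * s * k⁻¹) k) :
    P.σ (x * s * x⁻¹) = 1 ∧ ∀ k : G, P.σ k = 1 →
      (P.α k (x * s * x⁻¹) : K) = P.α (k * (x * s * x⁻¹) * k⁻¹) k :=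
  Wreg_conj_stable_general P hURC x s hs
end

section
/- Let g, k ∈ W and x ∈ G. Then f(kx,g) = f(x,g)·f(k,xgx^{-1}). In particular, if xgx^{-1} ∈ W_reg then f(kx,g) = f(x,g), so f(·,g) induces a well-defined map F_g : G/W → K, x̄ ↦ f(x,g), for g in a ray class of W. -/
/-!
Inside `W = Ker σ` the twisting by `σ` disappears from the cocycle identity, which becomes
`α(a,b) α(ab,c) = α(b,c) α(a,bc)`. Writing `h = xgx⁻¹`, so that `(kx)g(kx)⁻¹ = khk⁻¹`, the
cocycle identities at `(k,x,g)`, `(khk⁻¹,k,x)` and `(k,h,x)` trade every term of `f(kx,g)`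
for terms of `f(x,g)` and `f(k,h)`; all three triples start with an element of `W`.
-/

namespace CrysField

variable {G K A : Type*} [Group G] [Field K] [Ring A] (P : CrysField G K A)

def f (x g : G) : K := P.α x g / P.α (x * g * x⁻¹) x

theorem f_eq_one_iff (w h : G) :
    P.f w h = 1 ↔ (P.α w h : K) = P.α (w * h * w⁻¹) w :=
  div_eq_one_iff_eq (P.α _ _).ne_zero

variable {P}

theorem cocycle_of_mem_ker {a : G} (ha : a ∈ P.σ.ker) (b c : G) :
    (P.α a b : K) * P.α (a * b) c = P.α b c * P.α a (b * c) := by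
  simpa [MonoidHom.mem_ker.mp ha] using P.cocycle a b c

theorem f_mul_left {k g : G} (hk : k ∈ P.σ.ker) (hg : g ∈ P.σ.ker) (x : G) :
    P.f (k * x) g = P.f x g * P.f k (x * g * x⁻¹) := by
  set h := x * g * x⁻¹ with hh
  have hkhk : k * h * k⁻¹ ∈ P.σ.ker :=
    P.σ.normal_ker.conj_mem _ (P.σ.normal_ker.conj_mem g hg x) k
  have e₁ := cocycle_of_mem_ker hk x g
  have e₂ := cocycle_of_mem_ker hkhk k x
  have e₃ := cocycle_of_mem_ker hk h x
  rw [show k * h * k⁻¹ * k = k * h by simp only [hh]; group] at e₂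
  rw [show h * x = x * g by simp only [hh]; group] at e₃
  simp only [f, show k * x * g * (k * x)⁻¹ = k * h * k⁻¹ by simp only [hh]; group]
  rw [← hh]
  field_simp
  apply mul_left_cancel₀ (mul_ne_zero (P.α k x).ne_zero (P.α (k * h) x).ne_zero)
  linear_combination (P.α (k * h) x * P.α h x * P.α (k * h * k⁻¹) k : K) * e₁
    + (P.α x g * P.α k h * P.α (k * h) x : K) * e₂
    - (P.α (k * h * k⁻¹) k * P.α (k * h) x * P.α x g : K) * e₃

theorem f_mul_left_eq_of_f_eq_one {k g : G} (hk : k ∈ P.σ.ker) (hg : g ∈ P.σ.ker) {x : G}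
    (hreg : P.f k (x * g * x⁻¹) = 1) : P.f (k * x) g = P.f x g := by
  rw [f_mul_left hk hg, hreg, mul_one]

end CrysField

theorem f_coset_formula_general {G K A : Type*} [Group G] [Field K] [Ring A]
    (P : CrysField G K A) (g k x : G) (hg : P.σ g = 1) (hk : P.σ k = 1) :
    ((P.α (k * x) g : K) / (P.α ((k * x) * g * (k * x)⁻¹) (k * x) : K) =
      ((P.α x g : K) / (P.α (x * g * x⁻¹) x : K)) *
        ((P.α k (x * g * x⁻¹) : K) /
          (P.α (k * (x * g * x⁻¹) * k⁻¹) k : K))) ∧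
    ((∀ w : G, P.σ w = 1 →
        (P.α w (x * g * x⁻¹) : K) = P.α (w * (x * g * x⁻¹) * w⁻¹) w) →
      (P.α (k * x) g : K) / (P.α ((k * x) * g * (k * x)⁻¹) (k * x) : K) =
        (P.α x g : K) / (P.α (x * g * x⁻¹) x : K)) :=
  ⟨CrysField.f_mul_left hk hg x, fun hreg =>
    CrysField.f_mul_left_eq_of_f_eq_one hk hg ((P.f_eq_one_iff k _).mpr (hreg k hk))⟩

/-- For `g, k ∈ W = Ker σ` and `x ∈ G`, with `f(x,g) = α(x,g)/α(xgx⁻¹,x)`: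
`f(kx,g) = f(x,g) · f(k,xgx⁻¹)`.  In particular, if `xgx⁻¹ ∈ W_reg` then
`f(kx,g) = f(x,g)`, so `f(·,g)` induces a well-defined map `F_g : G/W → K`. -/
theorem f_coset_formula {G K A : Type*} [Group G] [Fintype G] [Field K] [Ring A]
    (P : CrysField G K A) (g k x : G) (hg : P.σ g = 1) (hk : P.σ k = 1) :
    ((P.α (k * x) g : K) / (P.α ((k * x) * g * (k * x)⁻¹) (k * x) : K) =
      ((P.α x g : K) / (P.α (x * g * x⁻¹) x : K)) *
        ((P.α k (x * g * x⁻¹) : K) /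
          (P.α (k * (x * g * x⁻¹) * k⁻¹) k : K))) ∧
    ((∀ w : G, P.σ w = 1 →
        (P.α w (x * g * x⁻¹) : K) = P.α (w * (x * g * x⁻¹) * w⁻¹) w) →
      (P.α (k * x) g : K) / (P.α ((k * x) * g * (k * x)⁻¹) (k * x) : K) =
        (P.α x g : K) / (P.α (x * g * x⁻¹) x : K)) :=
  f_coset_formula_general P g k x hg hk
end

section
/- Let A = D ◊_{σ,α} G with G finite non-Abelian, W = Ker σ, α satisfying URC on W, and let C be a ray class of W with N_G(C) = G that is constant under f. If d_C ∈ D∖{0} satisfies σ_x(d_C)·f(x,C) = d_C for all x ∈ G and some x has f(x,C) ≠ 1, then d_C lies in I_C = {d ∈ D : σ_x(d) = d·f(x,C)^{-1} for all x with f(x,C) ≠ 1}, and I_C is a D^G-module of rank 1 that is not multiplicatively closed. -/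
/-- The map `f(x,g) = α(x,g)/α(xgx⁻¹,x)`. -/
def crysF {G K : Type*} [Group G] [Field K] (α : G → G → K) (x g : G) : K :=
  α x g / α (x * g * x⁻¹) x

/-- The set `I_C = {d ∈ D : σ_x(d) = d·f(x,C)⁻¹ for all x with f(x,C) ≠ 1}`,
where `f(x,C) = f(x,g₀)` for a chosen representative `g₀` of the ray class `C`
(constant under `f`). -/
def crysIC {G K : Type*} [Group G] [Field K] (D : Subring K)
    (σ : G →* RingAut K) (α : G → G → K) (g₀ : G) : Set K :=
  {a : K | a ∈ D ∧ ∀ x : G, crysF α x g₀ ≠ 1 →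
    σ x a = a * (crysF α x g₀)⁻¹}

/-!
The elements `x` with `f(x,C) = 1` are exactly those fixing `d_C`, so they form a proper
subgroup `H` of `G`. A quotient `a / b` of nonzero elements of `I_C` is fixed by every `x ∉ H`,
and the complement of a proper subgroup generates the group (`x = (x z) z⁻¹` with `z ∉ H`),
so `a / b` is fixed by all of `G`. For `z ∉ H`, `σ_z(m n) = m n f(z,C)⁻²` differs from
`m n f(z,C)⁻¹`, so `I_C` is not multiplicatively closed.
-/

theorem Subgroup.eq_top_of_compl_subset {G : Type*} [Group G] {H K : Subgroup G}
    (hH : H ≠ ⊤) (hK : (H : Set G)ᶜ ⊆ K) : K = ⊤ := by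
  obtain ⟨z, hz⟩ : ∃ z, z ∉ H := by
    by_contra! h
    exact hH ((eq_top_iff' H).mpr h)
  have hzK : z ∈ K := hK hz
  refine (eq_top_iff' K).mpr fun x => ?_
  by_cases hx : x ∈ H
  · have hxz : x * z ∈ K := hK fun h => hz ((H.mul_mem_cancel_left hx).mp h)
    exact (K.mul_mem_cancel_right hzK).mp hxz
  · exact hK hx

section

variable {G K : Type*} [Group G] [Field K] {D : Subring K} {σ : G →* RingAut K}
  {α : G → G → K} {g₀ : G}

theorem crysF_ne_zero_of_mem_crysIC {a : K} (ha : a ∈ crysIC D σ α g₀) (ha0 : a ≠ 0)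
    {x : G} (hx : crysF α x g₀ ≠ 1) : crysF α x g₀ ≠ 0 := by
  intro h
  have hax := ha.2 x hx
  rw [h, inv_zero, mul_zero, map_eq_zero_iff _ (σ x).injective] at hax
  exact ha0 hax

theorem add_mem_crysIC {a b : K} (ha : a ∈ crysIC D σ α g₀) (hb : b ∈ crysIC D σ α g₀) :
    a + b ∈ crysIC D σ α g₀ :=
  ⟨D.add_mem ha.1 hb.1, fun x hx => by rw [map_add, ha.2 x hx, hb.2 x hx, add_mul]⟩

theorem mul_mem_crysIC_of_fixed {a c : K} (ha : a ∈ crysIC D σ α g₀) (hcD : c ∈ D)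
    (hc : ∀ x : G, σ x c = c) : c * a ∈ crysIC D σ α g₀ :=
  ⟨D.mul_mem hcD ha.1, fun x hx => by rw [map_mul, hc x, ha.2 x hx, mul_assoc]⟩

theorem map_div_eq_of_crysF_ne_one {a b : K} (ha : a ∈ crysIC D σ α g₀)
    (hb : b ∈ crysIC D σ α g₀) (hb0 : b ≠ 0) {x : G} (hx : crysF α x g₀ ≠ 1) :
    σ x (a / b) = a / b := by
  have hf : (crysF α x g₀)⁻¹ ≠ 0 := inv_ne_zero (crysF_ne_zero_of_mem_crysIC hb hb0 hx)
  rw [map_div₀, ha.2 x hx, hb.2 x hx, mul_div_mul_right _ _ hf]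

theorem mul_notMem_crysIC {m n : K} (hm : m ∈ crysIC D σ α g₀) (hn : n ∈ crysIC D σ α g₀)
    (hm0 : m ≠ 0) (hn0 : n ≠ 0) (hx : ∃ x : G, crysF α x g₀ ≠ 1) :
    m * n ∉ crysIC D σ α g₀ := by
  obtain ⟨z, hz⟩ := hx
  intro hmn
  have hsq := hmn.2 z hz
  rw [map_mul, hm.2 z hz, hn.2 z hz] at hsq
  have hf0 := crysF_ne_zero_of_mem_crysIC hm hm0 hz
  have h : m * n * (crysF α z g₀)⁻¹ * ((crysF α z g₀)⁻¹ - 1) = 0 := by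
    linear_combination hsq
  simp only [mul_eq_zero, hm0, hn0, inv_eq_zero, hf0, sub_eq_zero, inv_eq_one,
    false_or] at h
  exact hz h

variable {d : K}

theorem crysF_ne_zero_of_map_mul_eq (hd0 : d ≠ 0) {x : G} (hdx : σ x d * crysF α x g₀ = d) :
    crysF α x g₀ ≠ 0 := by
  intro h
  rw [h, mul_zero] at hdx
  exact hd0 hdx.symm

theorem crysF_eq_one_iff (hd0 : d ≠ 0) {x : G} (hdx : σ x d * crysF α x g₀ = d) :
    crysF α x g₀ = 1 ↔ σ x d = d := by
  constructor
  · intro h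
    rwa [h, mul_one] at hdx
  · intro h
    rwa [h, mul_eq_left₀ hd0] at hdx

theorem mem_crysIC_of_map_mul_eq (hdD : d ∈ D) (hd0 : d ≠ 0)
    (hd : ∀ x : G, σ x d * crysF α x g₀ = d) : d ∈ crysIC D σ α g₀ :=
  ⟨hdD, fun x _ =>
    (eq_mul_inv_iff_mul_eq₀ (crysF_ne_zero_of_map_mul_eq hd0 (hd x))).mpr (hd x)⟩

theorem map_div_eq_of_mem_crysIC (hd0 : d ≠ 0) (hd : ∀ x : G, σ x d * crysF α x g₀ = d)
    (hx : ∃ x : G, crysF α x g₀ ≠ 1) {a b : K} (ha : a ∈ crysIC D σ α g₀)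
    (hb : b ∈ crysIC D σ α g₀) (hb0 : b ≠ 0) (x : G) : σ x (a / b) = a / b := by
  set H := (MulAction.stabilizer (RingAut K) d).comap σ
  have hH : H ≠ ⊤ := by
    obtain ⟨z, hz⟩ := hx
    intro htop
    exact hz ((crysF_eq_one_iff hd0 (hd z)).mpr ((Subgroup.eq_top_iff' H).mp htop z))
  have htop : (MulAction.stabilizer (RingAut K) (a / b)).comap σ = ⊤ :=
    Subgroup.eq_top_of_compl_subset hH fun y hy =>
      map_div_eq_of_crysF_ne_one ha hb hb0 fun h => hy ((crysF_eq_one_iff hd0 (hd y)).mp h)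
  exact (Subgroup.eq_top_iff' _).mp htop x

end

theorem dC_mem_IC_and_IC_rank_one_general {G K : Type*} [Group G] [Field K]
    (D : Subring K) (σ : G →* RingAut K) (α : G → G → K) (g₀ : G)
    (d : K) (hdD : d ∈ D) (hd0 : d ≠ 0)
    (hd : ∀ x : G, σ x d * crysF α x g₀ = d)
    (hx0 : ∃ x : G, crysF α x g₀ ≠ 1) :
    d ∈ crysIC D σ α g₀ ∧
    (∀ a ∈ crysIC D σ α g₀, ∀ b ∈ crysIC D σ α g₀,
      a + b ∈ crysIC D σ α g₀ ∧
      ∀ c ∈ D, (∀ x : G, σ x c = c) → c * a ∈ crysIC D σ α g₀) ∧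
    (∀ a ∈ crysIC D σ α g₀, ∀ b ∈ crysIC D σ α g₀,
      a ≠ 0 → b ≠ 0 → ∀ x : G, σ x (a / b) = a / b) ∧
    (∀ m ∈ crysIC D σ α g₀, ∀ n ∈ crysIC D σ α g₀,
      m ≠ 0 → n ≠ 0 → m * n ∉ crysIC D σ α g₀) :=
  ⟨mem_crysIC_of_map_mul_eq hdD hd0 hd,
    fun _ ha _ hb => ⟨add_mem_crysIC ha hb, fun _ hcD hc => mul_mem_crysIC_of_fixed ha hcD hc⟩,
    fun _ ha _ hb _ hb0 => map_div_eq_of_mem_crysIC hd0 hd hx0 ha hb hb0,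
    fun _ hm _ hn hm0 hn0 => mul_notMem_crysIC hm hn hm0 hn0 hx0⟩

/-- Let `A = D ◊_{σ,α} G` with `D` a Dedekind domain inside its fraction field
`K`, `G` finite non-Abelian, `W = Ker σ`, `α` satisfying the URC on `W`, and let
`C` be a ray class of `W` (with representative `g₀ ∈ C`) with `N_G(C) = G` which
is constant under `f` (so `f(x,C) := f(x,g₀)` is well defined).  If
`d_C ∈ D \ {0}` satisfies `σ_x(d_C)·f(x,C) = d_C` for all `x ∈ G` and
`f(x,C) ≠ 1` for some `x`, then `d_C ∈ I_C`, and `I_C` is a `D^G`-module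
(closed under addition and multiplication by `G`-fixed elements of `D`) of rank
`1` (`a/b ∈ K^G` for nonzero `a, b ∈ I_C`) which is not multiplicatively
closed. -/
theorem dC_mem_IC_and_IC_rank_one {G K : Type*} [Group G] [Fintype G] [Field K]
    (D : Subring K) (hDed : IsDedekindDomain D)
    (σ : G →* RingAut K) (hσD : ∀ (x : G), ∀ d ∈ D, σ x d ∈ D)
    (α : G → G → K) (hαD : ∀ g h : G, α g h ∈ D) (hα : ∀ g h : G, α g h ≠ 0)
    (C : Finset G) (g₀ : G) (hg₀ : g₀ ∈ C)
    (hCW : ∀ g ∈ C, σ g = 1)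
    (hCreg : ∀ g ∈ C, ∀ k : G, σ k = 1 → crysF α k g = 1)
    (hCconst : ∀ g ∈ C, ∀ x : G, crysF α x g = crysF α x g₀)
    (hCnorm : ∀ (x : G), ∀ g ∈ C, x * g * x⁻¹ ∈ C)
    (d : K) (hdD : d ∈ D) (hd0 : d ≠ 0)
    (hd : ∀ x : G, σ x d * crysF α x g₀ = d)
    (hx0 : ∃ x : G, crysF α x g₀ ≠ 1) :
    d ∈ crysIC D σ α g₀ ∧
    (∀ a ∈ crysIC D σ α g₀, ∀ b ∈ crysIC D σ α g₀,
      a + b ∈ crysIC D σ α g₀ ∧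
      ∀ c ∈ D, (∀ x : G, σ x c = c) → c * a ∈ crysIC D σ α g₀) ∧
    (∀ a ∈ crysIC D σ α g₀, ∀ b ∈ crysIC D σ α g₀,
      a ≠ 0 → b ≠ 0 → ∀ x : G, σ x (a / b) = a / b) ∧
    (∀ m ∈ crysIC D σ α g₀, ∀ n ∈ crysIC D σ α g₀,
      m ≠ 0 → n ≠ 0 → m * n ∉ crysIC D σ α g₀) :=
  dC_mem_IC_and_IC_rank_one_general D σ α g₀ d hdD hd0 hd hx0
end
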